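/- Let n ≥ 1 be an integer, a ∈ ℝ with a ≠ 0, and β ∈ ℝ with β ≠ −1 and β ≠ −4. Suppose z ∈ ℝ^{2n} and w ∈ ℝ satisfy (z,w) ≠ (0,0) and 2(β+1)|z|⁸ + (3(β+2) − 2a²)|z|⁴w² + (β+2)a²w⁴ = 0. Let J be the 2n×2n real matrix [[0, Iₙ],[−Iₙ, 0]] and M(z,w) = |z|²·I_{2n} + a·w·J + 2·z·zᵀ − (β+4)·(|z|⁴/(|z|⁴+w²))·z·zᵀ. Then det M(z,w) ≠ 0. (Lemma 3.7: nondegeneracy of the upper-left 2n×2n block of the reduced Hessian on the singular set.) -/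

import Mathlib

noncomputable section

/-- The standard symplectic matrix `J = [[0, Iₙ], [−Iₙ, 0]]` as a `2n × 2n` real matrix,
indexed by `Fin n ⊕ Fin n`. -/
def Jmat (n : ℕ) : Matrix (Fin n ⊕ Fin n) (Fin n ⊕ Fin n) ℝ :=
  Matrix.fromBlocks 0 1 (-1) 0

/-- The matrix `M(z,w) = |z|²·I + a·w·J + 2·z·zᵀ − (β+4)(|z|⁴/(|z|⁴+w²))·z·zᵀ`. -/
def Mmat (n : ℕ) (a β : ℝ) (z : Fin n ⊕ Fin n → ℝ) (w : ℝ) :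
    Matrix (Fin n ⊕ Fin n) (Fin n ⊕ Fin n) ℝ :=
  (∑ i, z i ^ 2) • (1 : Matrix (Fin n ⊕ Fin n) (Fin n ⊕ Fin n) ℝ)
    + (a * w) • Jmat n + (2 : ℝ) • Matrix.vecMulVec z z
    - ((β + 4) * ((∑ i, z i ^ 2) ^ 2 / ((∑ i, z i ^ 2) ^ 2 + w ^ 2))) • Matrix.vecMulVec z z

/-!
Write `r = |z|²`, `d = 2 - (β+4) r² / (r² + w²)` and `M = r • 1 + (a w) • J + d • z zᵀ`.
Since `J² = -1`, the matrix `r • 1 + (a w) • J` has inverse `(r • 1 - (a w) • J) / (r² + a²w²)`,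
and since `J` is skew, `zᵀ J z = 0`. The matrix determinant lemma therefore gives
`det M = det (r • 1 + (a w) • J) · (1 + d r² / (r² + a²w²))`, and after clearing denominators
the second factor is the quartic `-(β+1) r⁴ + (3+a²) r² w² + a² w⁴`. Twice this quartic plus the
singular-set equation is `(β+4) w² (3r² + a²w²)`, so if it vanished then `w = 0`, and then
`(β+1) r⁴ = 0` with `r ≠ 0`.
-/

open Matrix

namespace Matrix

variable {ι : Type*} [Fintype ι]

section CommRing

variable {R : Type*} [CommRing R]

theorem dotProduct_mulVec_self_eq_zero [NoZeroDivisors R] [NeZero (2 : R)] {J : Matrix ι ι R}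
    (hJ : Jᵀ = -J) (z : ι → R) : z ⬝ᵥ (J *ᵥ z) = 0 := by
  have h : z ⬝ᵥ (J *ᵥ z) = -(z ⬝ᵥ (J *ᵥ z)) :=
    calc z ⬝ᵥ (J *ᵥ z) = z ⬝ᵥ (Jᵀ *ᵥ z) := by
          rw [mulVec_transpose, dotProduct_mulVec, dotProduct_comm]
      _ = -(z ⬝ᵥ (J *ᵥ z)) := by rw [hJ, neg_mulVec, dotProduct_neg]
  have h2 : (2 : R) * (z ⬝ᵥ (J *ᵥ z)) = 0 := by linear_combination h
  exact (mul_eq_zero.mp h2).resolve_left two_ne_zero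

theorem det_add_vecMulVec [DecidableEq ι] {A : Matrix ι ι R} (hA : IsUnit A.det) (u v : ι → R) :
    (A + vecMulVec u v).det = A.det * (1 + v ⬝ᵥ (A⁻¹ *ᵥ u)) := by
  rw [vecMulVec_eq Unit, det_add_replicateCol_mul_replicateRow hA, Matrix.mul_assoc,
    ← replicateCol_mulVec, det_unique (1 + _), add_apply, one_apply_eq,
    replicateRow_mul_replicateCol_apply]

end CommRing

section Field

variable {K : Type*} [Field K] [DecidableEq ι] {J : Matrix ι ι K}

theorem smul_one_add_smul_mul_smul_one_sub_smul (hJ : J * J = -1) (r b : K) :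
    (r • 1 + b • J) * (r • 1 - b • J) = (r ^ 2 + b ^ 2) • (1 : Matrix ι ι K) := by
  simp only [add_mul, mul_sub, smul_mul_smul, Matrix.one_mul, Matrix.mul_one, hJ, smul_neg,
    mul_comm b r]
  module

theorem mul_smul_inv_smul_one_sub_smul (hJ : J * J = -1) {r b : K} (h : r ^ 2 + b ^ 2 ≠ 0) :
    (r • 1 + b • J) * ((r ^ 2 + b ^ 2)⁻¹ • (r • 1 - b • J)) = 1 := by
  rw [Matrix.mul_smul, smul_one_add_smul_mul_smul_one_sub_smul hJ, smul_smul, inv_mul_cancel₀ h,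
    one_smul]

theorem inv_smul_one_add_smul (hJ : J * J = -1) {r b : K} (h : r ^ 2 + b ^ 2 ≠ 0) :
    (r • 1 + b • J)⁻¹ = (r ^ 2 + b ^ 2)⁻¹ • (r • 1 - b • J) :=
  inv_eq_right_inv (mul_smul_inv_smul_one_sub_smul hJ h)

theorem isUnit_det_smul_one_add_smul (hJ : J * J = -1) {r b : K} (h : r ^ 2 + b ^ 2 ≠ 0) :
    IsUnit (r • 1 + b • J).det :=
  isUnit_det_of_right_inverse (mul_smul_inv_smul_one_sub_smul hJ h)

theorem det_smul_one_add_smul_add_smul_vecMulVec [NeZero (2 : K)] (hJ : J * J = -1)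
    (hJt : Jᵀ = -J) {r b : K} (h : r ^ 2 + b ^ 2 ≠ 0) (d : K) (z : ι → K) :
    (r • 1 + b • J + d • vecMulVec z z).det
      = (r • 1 + b • J).det * (1 + d * r * (z ⬝ᵥ z) / (r ^ 2 + b ^ 2)) := by
  rw [← smul_vecMulVec, det_add_vecMulVec (isUnit_det_smul_one_add_smul hJ h),
    inv_smul_one_add_smul hJ h]
  simp only [smul_mulVec, sub_mulVec, one_mulVec, mulVec_smul, dotProduct_smul,
    dotProduct_sub, dotProduct_mulVec_self_eq_zero hJt, smul_eq_mul]
  ring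

end Field

end Matrix

theorem Jmat_mul_self (n : ℕ) : Jmat n * Jmat n = -1 := by
  simp [Jmat, fromBlocks_multiply, ← fromBlocks_one, fromBlocks_neg]

theorem transpose_Jmat (n : ℕ) : (Jmat n)ᵀ = -Jmat n := by
  simp [Jmat, fromBlocks_transpose, fromBlocks_neg]

theorem Mmat_eq (n : ℕ) (a β : ℝ) (z : Fin n ⊕ Fin n → ℝ) (w : ℝ) :
    Mmat n a β z w = (∑ i, z i ^ 2) • 1 + (a * w) • Jmat n
      + (2 - (β + 4) * ((∑ i, z i ^ 2) ^ 2 / ((∑ i, z i ^ 2) ^ 2 + w ^ 2))) • vecMulVec z z := by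
  rw [Mmat, sub_smul, ← add_sub_assoc]

theorem quartic_ne_zero_of_singular {r w a β : ℝ} (hrw : r ≠ 0 ∨ w ≠ 0) (ha : a ≠ 0)
    (hβ1 : β ≠ -1) (hβ4 : β ≠ -4)
    (hsing : 2 * (β + 1) * r ^ 4 + (3 * (β + 2) - 2 * a ^ 2) * r ^ 2 * w ^ 2
        + (β + 2) * a ^ 2 * w ^ 4 = 0) :
    -(β + 1) * r ^ 4 + (3 + a ^ 2) * r ^ 2 * w ^ 2 + a ^ 2 * w ^ 4 ≠ 0 := by
  intro hN
  have hw : w = 0 := by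
    by_contra hw
    have hβ4' : β + 4 ≠ 0 := fun h => hβ4 (by linarith)
    have hpos : 0 < 3 * r ^ 2 + a ^ 2 * w ^ 2 := by positivity
    exact mul_ne_zero (mul_ne_zero hβ4' (pow_ne_zero 2 hw)) hpos.ne'
      (by linear_combination 2 * hN + hsing)
  have hr : r ≠ 0 := hrw.resolve_right (not_not.mpr hw)
  have hβ1' : β + 1 ≠ 0 := fun h => hβ1 (by linarith)
  subst hw
  exact mul_ne_zero hβ1' (pow_ne_zero 4 hr) (by linear_combination -hN)

theorem det_Mmat_ne_zero_general (n : ℕ) (a β : ℝ) (ha : a ≠ 0)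
    (hβ1 : β ≠ -1) (hβ4 : β ≠ -4) (z : Fin n ⊕ Fin n → ℝ) (w : ℝ)
    (hzw : z ≠ 0 ∨ w ≠ 0)
    (hsing : 2 * (β + 1) * (∑ i, z i ^ 2) ^ 4
        + (3 * (β + 2) - 2 * a ^ 2) * (∑ i, z i ^ 2) ^ 2 * w ^ 2
        + (β + 2) * a ^ 2 * w ^ 4 = 0) :
    (Mmat n a β z w).det ≠ 0 := by
  rw [Mmat_eq]
  set r := ∑ i, z i ^ 2
  have hzz : z ⬝ᵥ z = r := by simp [r, dotProduct, sq]
  have hrw : r ≠ 0 ∨ w ≠ 0 := hzw.imp_left fun hz => by rwa [← hzz, Ne, dotProduct_self_eq_zero]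
  have hrw' : r ^ 2 + w ^ 2 ≠ 0 := by
    rcases hrw with h | h <;> positivity
  have hrb : r ^ 2 + (a * w) ^ 2 ≠ 0 := by
    rcases hrw.imp_right (mul_ne_zero ha) with h | h <;> positivity
  rw [det_smul_one_add_smul_add_smul_vecMulVec (Jmat_mul_self n) (transpose_Jmat n) hrb, hzz]
  refine mul_ne_zero (isUnit_det_smul_one_add_smul (Jmat_mul_self n) hrb).ne_zero ?_
  rw [one_add_div hrb]
  refine div_ne_zero (fun h => quartic_ne_zero_of_singular hrw ha hβ1 hβ4 hsing ?_) hrb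
  -- clearing the denominator `r² + w²` turns the second factor into the quartic
  rw [← zero_mul (r ^ 2 + w ^ 2), ← h]
  field_simp
  ring

/-- Lemma 3.7: if `a ≠ 0`, `β ≠ −1`, `β ≠ −4`, `(z,w) ≠ (0,0)` and
`2(β+1)|z|⁸ + (3(β+2)−2a²)|z|⁴w² + (β+2)a²w⁴ = 0`, then `det M(z,w) ≠ 0`. -/
theorem det_Mmat_ne_zero (n : ℕ) (hn : 1 ≤ n) (a β : ℝ) (ha : a ≠ 0)
    (hβ1 : β ≠ -1) (hβ4 : β ≠ -4) (z : Fin n ⊕ Fin n → ℝ) (w : ℝ)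
    (hzw : z ≠ 0 ∨ w ≠ 0)
    (hsing : 2 * (β + 1) * (∑ i, z i ^ 2) ^ 4
        + (3 * (β + 2) - 2 * a ^ 2) * (∑ i, z i ^ 2) ^ 2 * w ^ 2
        + (β + 2) * a ^ 2 * w ^ 4 = 0) :
    (Mmat n a β z w).det ≠ 0 :=
  det_Mmat_ne_zero_general n a β ha hβ1 hβ4 z w hzw hsing
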